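/- There exist ε₀∈(0,1) and C>0 with the following property. Let V:ℝ→ℝ be 2π-periodic and C⁴ with ‖V−cos‖_{H⁴}≤ε₀, and set m=min V, M=max V. Then for every λ∈ℝ and every continuous 2π-periodic f:ℝ→ℂ, ∫₀^{2π}|V'(y)|²|f(y)|²dy ≤ C·|∫₀^{2π}(V(y)−λ)|f(y)|²dy| + C·λ₀₊·∫₀^{2π}|f(y)|²dy, where λ₀₊ = max(min(λ−m, M−λ), 0). -/

import Mathlib

open Real MeasureTheory

/-- The `L²` norm over one period `[0,2π]` of a real-valued function. -/
noncomputable def l2R (g : ℝ → ℝ) : ℝ := Real.sqrt (∫ y in (0:ℝ)..(2*π), (g y)^2)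

/-- The `H⁴` norm over one period `[0,2π]` of a real-valued function. -/
noncomputable def H4R (g : ℝ → ℝ) : ℝ :=
  Real.sqrt (∑ j ∈ Finset.range 5, (l2R (iteratedDeriv j g))^2)

/-
Write `V = cos + g`. The `H⁴` bound controls `g''` and `g'''` in `L²` over a period, and the
one-dimensional Sobolev inequality turns this into a uniform bound on `g''`, hence `|V''| ≤ L`
with `L = 6/5`. A function with `W'' ≤ L` lies below its tangent parabolas; evaluating at the
vertex and using `W ≥ m` gives Glaeser's inequality `W'² ≤ 2L (W - m)`. Applied to `V` and `-V`
this yields `V'² ≤ 2L · min (V - m, M - V)`, and `min (v - m, M - v) ≤ ±(v - λ) + λ₀₊` with a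
sign depending only on which end of `[m, M]` is nearer to `λ`; multiplying by `|f|²` and
integrating gives the estimate.
-/

open Set
open scoped Interval

section Sobolev

variable {h h' : ℝ → ℝ}

theorem sq_sub_sq_le_integral_sq_add_sq (hd : ∀ t, HasDerivAt h (h' t) t)
    (hc : Continuous h') {a b x y : ℝ} (hx : x ∈ Icc a b) (hy : y ∈ Icc a b) :
    h x ^ 2 - h y ^ 2 ≤ ∫ t in a..b, (h t ^ 2 + h' t ^ 2) := by
  have hhc : Continuous h := continuous_iff_continuousAt.2 fun t => (hd t).continuousAt
  have hab : a ≤ b := hx.1.trans hx.2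
  have hftc : ∫ t in y..x, 2 * h t * h' t = h x ^ 2 - h y ^ 2 := by
    refine intervalIntegral.integral_eq_sub_of_hasDerivAt (f := fun t => h t ^ 2)
      (fun t _ => ?_) ((by fun_prop : Continuous fun t => 2 * h t * h' t).intervalIntegrable _ _)
    have := (hd t).fun_pow 2
    norm_num at this
    exact this.congr_deriv (by ring)
  have hsub : Ι y x ⊆ Ioc a b := by
    simpa [uIoc_of_le hab] using uIoc_subset_uIoc_of_uIcc_subset_uIcc
      (uIcc_subset_uIcc (Icc_subset_uIcc hy) (Icc_subset_uIcc hx))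
  have hsum : Continuous fun t => h t ^ 2 + h' t ^ 2 := by fun_prop
  calc h x ^ 2 - h y ^ 2 ≤ ‖∫ t in y..x, 2 * h t * h' t‖ := hftc ▸ le_abs_self _
    _ ≤ ∫ t in Ι y x, ‖2 * h t * h' t‖ :=
        intervalIntegral.norm_integral_le_integral_norm_uIoc
    _ ≤ ∫ t in Ι y x, (h t ^ 2 + h' t ^ 2) := by
        refine setIntegral_mono
          (by fun_prop : Continuous fun t => ‖2 * h t * h' t‖).integrableOn_uIoc
          hsum.integrableOn_uIoc fun t => ?_
        rw [Real.norm_eq_abs, abs_le]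
        constructor <;> nlinarith [sq_nonneg (h t + h' t), sq_nonneg (h t - h' t)]
    _ ≤ ∫ t in Ioc a b, (h t ^ 2 + h' t ^ 2) :=
        setIntegral_mono_set hsum.integrableOn_Ioc (ae_of_all _ fun t => by positivity)
          hsub.eventuallyLE
    _ = ∫ t in a..b, (h t ^ 2 + h' t ^ 2) := (intervalIntegral.integral_of_le hab).symm

theorem sq_le_integral_sq_div_add_integral_sq_add_sq
    (hd : ∀ t, HasDerivAt h (h' t) t) (hc : Continuous h') {a b x : ℝ} (hab : a < b)
    (hx : x ∈ Icc a b) :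
    h x ^ 2 ≤ (∫ t in a..b, h t ^ 2) / (b - a) + ∫ t in a..b, (h t ^ 2 + h' t ^ 2) := by
  have hhc : Continuous h := continuous_iff_continuousAt.2 fun t => (hd t).continuousAt
  set S := ∫ t in a..b, (h t ^ 2 + h' t ^ 2)
  have hmono : ∫ _ in a..b, (h x ^ 2 - S) ≤ ∫ t in a..b, h t ^ 2 :=
    intervalIntegral.integral_mono_on hab.le intervalIntegrable_const
      ((by fun_prop : Continuous fun t => h t ^ 2).intervalIntegrable _ _) fun y hy => by
        linarith [sq_sub_sq_le_integral_sq_add_sq hd hc hx hy]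
  rw [intervalIntegral.integral_const, smul_eq_mul] at hmono
  rw [← sub_le_iff_le_add, le_div_iff₀ (sub_pos.2 hab)]
  linarith

end Sobolev

theorem ConcaveOn.le_add_mul_sub_of_hasDerivAt {S : Set ℝ} {f : ℝ → ℝ} {f' x y : ℝ}
    (hf : ConcaveOn ℝ S f) (hx : x ∈ S) (hy : y ∈ S) (hf' : HasDerivAt f f' x) :
    f y ≤ f x + f' * (y - x) := by
  rcases lt_trichotomy x y with hxy | rfl | hyx
  · have := hf.slope_le_of_hasDerivAt hx hy hxy hf'
    rw [slope_def_field, div_le_iff₀ (sub_pos.2 hxy)] at this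
    linarith
  · simp
  · have := hf.le_slope_of_hasDerivAt hy hx hyx hf'
    rw [slope_def_field, le_div_iff₀ (sub_pos.2 hyx)] at this
    linarith

section Glaeser

variable {W W' W'' : ℝ → ℝ} {L : ℝ}

theorem le_add_deriv_mul_add_sq_of_deriv2_le (hW : ∀ t, HasDerivAt W (W' t) t)
    (hW' : ∀ t, HasDerivAt W' (W'' t) t) (hL : ∀ t, W'' t ≤ L) (x y : ℝ) :
    W y ≤ W x + W' x * (y - x) + L / 2 * (y - x) ^ 2 := by
  have hφ (t : ℝ) : HasDerivAt (fun t => W t - L / 2 * t ^ 2) (W' t - L * t) t := by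
    refine ((hW t).fun_sub (((hasDerivAt_id' t).fun_pow 2).const_mul (L / 2))).congr_deriv ?_
    norm_num; ring
  have hφ' (t : ℝ) : HasDerivAt (fun t => W' t - L * t) (W'' t - L) t := by
    simpa using (hW' t).fun_sub ((hasDerivAt_id' t).const_mul L)
  have hconc : ConcaveOn ℝ univ fun t => W t - L / 2 * t ^ 2 :=
    concaveOn_of_hasDerivWithinAt2_nonpos convex_univ
      (fun t _ => (hφ t).continuousAt.continuousWithinAt)
      (fun t _ => (hφ t).hasDerivWithinAt) (fun t _ => (hφ' t).hasDerivWithinAt)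
      (fun t _ => sub_nonpos.2 (hL t))
  have := hconc.le_add_mul_sub_of_hasDerivAt (mem_univ x) (mem_univ y) (hφ x)
  nlinarith

theorem sq_le_two_mul_sub_of_deriv2_le (hW : ∀ t, HasDerivAt W (W' t) t)
    (hW' : ∀ t, HasDerivAt W' (W'' t) t) (hL : ∀ t, W'' t ≤ L) (hL0 : 0 < L) {m : ℝ}
    (hm : ∀ t, m ≤ W t) (x : ℝ) : W' x ^ 2 ≤ 2 * L * (W x - m) := by
  -- the parabola bounding `W` from above has its vertex at `x - W' x / L`
  have := (hm _).trans (le_add_deriv_mul_add_sq_of_deriv2_le hW hW' hL x (x - W' x / L))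
  have e : W' x * (x - W' x / L - x) + L / 2 * (x - W' x / L - x) ^ 2 =
      -(W' x ^ 2 / (2 * L)) := by
    field_simp; ring
  rw [add_assoc, e, ← sub_eq_add_neg, le_sub_comm, div_le_iff₀ (by positivity)] at this
  linarith

theorem sq_le_two_mul_min_of_abs_deriv2_le {m M : ℝ}
    (hW : ∀ t, HasDerivAt W (W' t) t) (hW' : ∀ t, HasDerivAt W' (W'' t) t)
    (hL : ∀ t, |W'' t| ≤ L) (hL0 : 0 < L) (hm : ∀ t, m ≤ W t) (hM : ∀ t, W t ≤ M) (x : ℝ) :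
    W' x ^ 2 ≤ 2 * L * min (W x - m) (M - W x) := by
  have hbelow := sq_le_two_mul_sub_of_deriv2_le hW hW' (fun t => (abs_le.1 (hL t)).2) hL0 hm x
  have habove := sq_le_two_mul_sub_of_deriv2_le (fun t => (hW t).neg) (fun t => (hW' t).neg)
    (fun t => neg_le.1 (abs_le.1 (hL t)).1) hL0 (fun t => neg_le_neg (hM t)) x
  rw [Pi.neg_apply, neg_sq, neg_sub_neg] at habove
  rw [mul_min_of_nonneg _ _ (by positivity)]
  exact le_min hbelow habove

end Glaeser

theorem Function.Periodic.iteratedDeriv {𝕜 F : Type*} [NontriviallyNormedField 𝕜]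
    [NormedAddCommGroup F] [NormedSpace 𝕜 F] {f : 𝕜 → F} {c : 𝕜} (hf : Function.Periodic f c)
    (n : ℕ) : Function.Periodic (iteratedDeriv n f) c := fun x => by
  simpa [funext hf] using (congrFun (iteratedDeriv_comp_add_const n f c) x).symm

theorem integral_sq_iteratedDeriv_le_of_H4R_le {g : ℝ → ℝ} {ε : ℝ} (h : H4R g ≤ ε) {j : ℕ}
    (hj : j < 5) : ∫ y in (0:ℝ)..(2*π), iteratedDeriv j g y ^ 2 ≤ ε ^ 2 := by
  have hsum := (Real.sqrt_le_iff.1 h).2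
  have hterm := (Finset.single_le_sum (fun i _ => sq_nonneg (l2R (iteratedDeriv i g)))
    (Finset.mem_range.2 hj)).trans hsum
  rwa [l2R, Real.sq_sqrt (intervalIntegral.integral_nonneg two_pi_pos.le
    fun y _ => sq_nonneg _)] at hterm

theorem sq_iteratedDeriv_two_le_of_H4R_le {g : ℝ → ℝ} {ε x : ℝ} (hg : ContDiff ℝ 3 g)
    (h : H4R g ≤ ε) (hx : x ∈ Icc 0 (2 * π)) : iteratedDeriv 2 g x ^ 2 ≤ 3 * ε ^ 2 := by
  have hd (t : ℝ) : HasDerivAt (iteratedDeriv 2 g) (iteratedDeriv 3 g t) t := by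
    have := ((hg.differentiable_iteratedDeriv 2 (by norm_num)) t).hasDerivAt
    rwa [← iteratedDeriv_succ] at this
  have hsob := sq_le_integral_sq_div_add_integral_sq_add_sq hd
    (hg.continuous_iteratedDeriv 3 le_rfl) two_pi_pos hx
  have h2 := integral_sq_iteratedDeriv_le_of_H4R_le h (j := 2) (by norm_num)
  have h3 := integral_sq_iteratedDeriv_le_of_H4R_le h (j := 3) (by norm_num)
  have hint (j : ℕ) (hj : j ≤ 3) :
      IntervalIntegrable (fun y => iteratedDeriv j g y ^ 2) volume 0 (2 * π) :=
    ((hg.continuous_iteratedDeriv j (by exact_mod_cast hj)).pow 2).intervalIntegrable _ _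
  rw [intervalIntegral.integral_add (hint 2 (by norm_num)) (hint 3 le_rfl), sub_zero] at hsob
  have hdiv : (∫ y in (0:ℝ)..(2*π), iteratedDeriv 2 g y ^ 2) / (2 * π) ≤ ε ^ 2 :=
    (div_le_iff₀ two_pi_pos).2 (by nlinarith [pi_gt_three, sq_nonneg ε])
  linarith

theorem abs_iteratedDeriv_two_le_of_H4R_sub_cos_le {V : ℝ → ℝ} {ε : ℝ}
    (hper : Function.Periodic V (2 * π)) (hV : ContDiff ℝ 3 V)
    (h : H4R (fun y => V y - cos y) ≤ ε) (x : ℝ) : |iteratedDeriv 2 V x| ≤ 1 + 2 * ε := by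
  obtain ⟨y, hy, hxy⟩ := (hper.iteratedDeriv 2).exists_mem_Ico₀ two_pi_pos x
  have hε : 0 ≤ ε := (Real.sqrt_nonneg _).trans h
  have hsq := sq_iteratedDeriv_two_le_of_H4R_le (hV.sub contDiff_cos) h (Ico_subset_Icc_self hy)
  have hg : iteratedDeriv 2 (fun y => V y - cos y) y = iteratedDeriv 2 V y + cos y := by
    rw [iteratedDeriv_fun_sub (hV.of_le (by norm_num)).contDiffAt contDiff_cos.contDiffAt]
    simp
  have hgε : |iteratedDeriv 2 V y + cos y| ≤ 2 * ε :=
    abs_le_of_sq_le_sq (hg ▸ hsq.trans (by nlinarith)) (by positivity)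
  calc |iteratedDeriv 2 V x| = |(iteratedDeriv 2 V y + cos y) - cos y| := by rw [hxy]; ring_nf
    _ ≤ |iteratedDeriv 2 V y + cos y| + |cos y| := abs_sub _ _
    _ ≤ 1 + 2 * ε := by linarith [abs_cos_le_one y]

theorem exists_abs_eq_one_min_sub_le (m M lam : ℝ) :
    ∃ σ : ℝ, |σ| = 1 ∧
      ∀ v, min (v - m) (M - v) ≤ σ * (v - lam) + max (min (lam - m) (M - lam)) 0 := by
  rcases le_total (lam - m) (M - lam) with h | h
  · refine ⟨1, abs_one, fun v => ?_⟩
    rw [min_eq_left h]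
    linarith [min_le_left (v - m) (M - v), le_max_left (lam - m) 0]
  · refine ⟨-1, by simp, fun v => ?_⟩
    rw [min_eq_right h]
    linarith [min_le_right (v - m) (M - v), le_max_left (M - lam) 0]

theorem integral_mul_le_of_le_mul_min {a b K m M lam : ℝ} {V D F : ℝ → ℝ} (hab : a ≤ b)
    (hV : Continuous V) (hD : Continuous D) (hF : Continuous F) (hF0 : ∀ t, 0 ≤ F t)
    (hK : 0 ≤ K) (hDV : ∀ t, D t ≤ K * min (V t - m) (M - V t)) :
    ∫ t in a..b, D t * F t ≤ K * |∫ t in a..b, (V t - lam) * F t| +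
      K * max (min (lam - m) (M - lam)) 0 * ∫ t in a..b, F t := by
  obtain ⟨σ, hσ, hmin⟩ := exists_abs_eq_one_min_sub_le m M lam
  set ℓ := max (min (lam - m) (M - lam)) 0
  have hpt (t : ℝ) : D t * F t ≤ K * σ * ((V t - lam) * F t) + K * ℓ * F t := by
    have := mul_le_mul_of_nonneg_left (hmin (V t)) hK
    nlinarith [mul_le_mul_of_nonneg_right ((hDV t).trans this) (hF0 t)]
  have hVF : Continuous fun t => (V t - lam) * F t := by fun_prop
  have hint : ∫ t in a..b, D t * F t ≤
      ∫ t in a..b, (K * σ * ((V t - lam) * F t) + K * ℓ * F t) :=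
    intervalIntegral.integral_mono_on hab ((hD.mul hF).intervalIntegrable _ _)
      (((hVF.const_mul (K * σ)).add (hF.const_mul (K * ℓ))).intervalIntegrable _ _)
      fun t _ => hpt t
  rw [intervalIntegral.integral_add ((hVF.const_mul _).intervalIntegrable _ _)
    ((hF.const_mul _).intervalIntegrable _ _), intervalIntegral.integral_const_mul,
    intervalIntegral.integral_const_mul] at hint
  have hσI : σ * ∫ t in a..b, (V t - lam) * F t ≤ |∫ t in a..b, (V t - lam) * F t| := by
    simpa [abs_mul, hσ] using le_abs_self (σ * ∫ t in a..b, (V t - lam) * F t)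
  nlinarith [mul_le_mul_of_nonneg_left hσI hK]

theorem stmt7 :
    ∃ ε₀ C : ℝ, ε₀ ∈ Set.Ioo (0:ℝ) 1 ∧ 0 < C ∧
      ∀ (V : ℝ → ℝ), Function.Periodic V (2*π) → ContDiff ℝ 4 V →
        H4R (fun y => V y - Real.cos y) ≤ ε₀ →
      ∀ (lam : ℝ) (f : ℝ → ℂ), Continuous f → Function.Periodic f (2*π) →
        (∫ y in (0:ℝ)..(2*π), (deriv V y)^2 * ‖f y‖^2) ≤
          C * |∫ y in (0:ℝ)..(2*π), (V y - lam) * ‖f y‖^2| +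
            C * max (min (lam - sInf (Set.range V)) (sSup (Set.range V) - lam)) 0 *
              ∫ y in (0:ℝ)..(2*π), ‖f y‖^2 := by
  refine ⟨1 / 10, 2 * (1 + 2 * (1 / 10)), ⟨by norm_num, by norm_num⟩, by norm_num, ?_⟩
  intro V hper hV hH4 lam f hf _
  have hbdd := hper.isBounded_of_continuous two_pi_pos.ne' hV.continuous
  have hV' (t : ℝ) : HasDerivAt V (deriv V t) t := (hV.differentiable (by norm_num) t).hasDerivAt
  have hV'' (t : ℝ) : HasDerivAt (deriv V) (iteratedDeriv 2 V t) t := by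
    have := (hV.differentiable_iteratedDeriv 1 (by norm_num) t).hasDerivAt
    rwa [← iteratedDeriv_succ, iteratedDeriv_one] at this
  have hslope := sq_le_two_mul_min_of_abs_deriv2_le hV' hV''
    (abs_iteratedDeriv_two_le_of_H4R_sub_cos_le hper (hV.of_le (by norm_num)) hH4)
    (by norm_num) (fun t => csInf_le hbdd.bddBelow ⟨t, rfl⟩)
    (fun t => le_csSup hbdd.bddAbove ⟨t, rfl⟩)
  exact integral_mul_le_of_le_mul_min two_pi_pos.le hV.continuous
    ((hV.continuous_deriv (by norm_num)).pow 2) ((continuous_norm.comp hf).pow 2)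
    (fun _ => sq_nonneg _) (by norm_num) hslope
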